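/- Let κ ∈ (0,1). There exists a constant c > 0 such that for all 0 < s < t and all x, y ∈ ℝ, one has −|x−y|^{1+2κ} (∂²/∂t∂s) p_{t,s}(x,y) ≤ c ( |t−s|^{κ−2} s^{−1/2} + |t−s|^{κ−1} s^{−3/2} ), where p_{t,s}(x,y) = (2π)⁻¹ (s(t−s))^{−1/2} exp(−(x−y)²/(2(t−s)) − y²/(2s)). -/

import Mathlib

/-!
With `u = t - s`, `z = (x - y)² / u` and `v = y² / s` one has `|x - y|^{1+2κ} = z^{κ+1/2} u^{κ+1/2}`
and `p_{t,s}(x,y) = (2π)⁻¹ s^{-1/2} u^{-1/2} e^{-z/2} e^{-v/2}`, so the left-hand side is exactly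
`u^{κ-2} s^{-1/2} Φ₁(z,v) + u^{κ-1} s^{-3/2} Φ₂(z,v)` with `Φᵢ = ptsDProfileᵢ κ`, each a product of
`z^{κ+1/2} · (polynomial in z) · e^{-z/2}` and `(polynomial in v) · e^{-v/2}`. Such functions are
continuous on `[0, ∞)` and tend to `0` at infinity, hence are bounded.
-/

noncomputable section

/-- `p_{t,s}(x,y) = (2π)⁻¹ (s(t−s))^{−1/2} exp(−(x−y)²/(2(t−s)) − y²/(2s))`,
the joint density of a Brownian motion at times `s` and `t`. -/
def pts (t s x y : ℝ) : ℝ :=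
  (2 * Real.pi)⁻¹ * (Real.sqrt (s * (t - s)))⁻¹ *
    Real.exp (-(x - y) ^ 2 / (2 * (t - s)) - y ^ 2 / (2 * s))

/-- The explicit formula for the mixed partial derivative `(∂²/∂t∂s) p_{t,s}(x,y)`
(Lemma 3.3(i) of the paper). -/
def ptsD (t s x y : ℝ) : ℝ :=
  (1 / 4) * pts t s x y * (y ^ 2 / s ^ 2 - 1 / s) *
      ((y - x) ^ 2 / (t - s) ^ 2 - 1 / (t - s))
    - (1 / 4) * pts t s x y * ((y - x) ^ 2 / (t - s) ^ 2 - 1 / (t - s)) ^ 2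
    + (1 / 2) * pts t s x y * (2 * (y - x) ^ 2 / (t - s) ^ 3 - 1 / (t - s) ^ 2)

open Real Filter Topology Set Polynomial

theorem Continuous.exists_forall_abs_le_of_tendsto_atTop {f : ℝ → ℝ} (hf : Continuous f)
    {l : ℝ} (hlim : Tendsto f atTop (𝓝 l)) (a : ℝ) : ∃ C, ∀ z, a ≤ z → |f z| ≤ C := by
  obtain ⟨s, hs, hbdd⟩ := Metric.exists_isBounded_image_of_tendsto hlim
  obtain ⟨R, hR⟩ := mem_atTop_sets.1 hs
  have hbdd' : Bornology.IsBounded (f '' (Icc a R ∪ s)) := by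
    rw [image_union]; exact (isCompact_Icc.image hf).isBounded.union hbdd
  obtain ⟨C, hC⟩ := isBounded_iff_forall_norm_le.1 hbdd'
  refine ⟨C, fun z hz => hC _ (mem_image_of_mem f ?_)⟩
  rcases le_total z R with h | h
  · exact Or.inl ⟨hz, h⟩
  · exact Or.inr (hR z h)

theorem tendsto_rpow_mul_eval_mul_exp_neg_mul_atTop (r : ℝ) (p : ℝ[X]) {b : ℝ} (hb : 0 < b) :
    Tendsto (fun z => z ^ r * p.eval z * exp (-b * z)) atTop (𝓝 0) := by
  have hsum : Tendsto (fun z => ∑ i ∈ Finset.range (p.natDegree + 1),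
      p.coeff i * (z ^ (r + i) * exp (-b * z))) atTop (𝓝 0) := by
    simpa using tendsto_finsetSum _ fun (i : ℕ) _ =>
      (tendsto_rpow_mul_exp_neg_mul_atTop_nhds_zero (r + i) b hb).const_mul (p.coeff i)
  refine hsum.congr' ?_
  filter_upwards [eventually_gt_atTop 0] with z hz
  simp only [eval_eq_sum_range, Finset.mul_sum, Finset.sum_mul, rpow_add_natCast hz.ne']
  exact Finset.sum_congr rfl fun i _ => by ring

theorem exists_forall_abs_rpow_mul_eval_mul_exp_neg_mul_le {r : ℝ} (hr : 0 ≤ r) (p : ℝ[X])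
    {b : ℝ} (hb : 0 < b) : ∃ C, ∀ z, 0 ≤ z → |z ^ r * p.eval z * exp (-b * z)| ≤ C :=
  Continuous.exists_forall_abs_le_of_tendsto_atTop (by fun_prop)
    (tendsto_rpow_mul_eval_mul_exp_neg_mul_atTop r p hb) 0

def ptsDProfile₁ (κ z v : ℝ) : ℝ :=
  (8 * π)⁻¹ * (z ^ (κ + 1/2) * (z ^ 2 - 6 * z + 3) * exp (-(1/2) * z)) * exp (-(1/2) * v)

def ptsDProfile₂ (κ z v : ℝ) : ℝ :=
  (8 * π)⁻¹ * (z ^ (κ + 1/2) * (1 - z) * exp (-(1/2) * z)) * ((v - 1) * exp (-(1/2) * v))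

theorem exists_abs_ptsDProfile_le {κ : ℝ} (hκ : 0 ≤ κ + 1/2) :
    ∃ C, 0 < C ∧ ∀ z v, 0 ≤ z → 0 ≤ v → |ptsDProfile₁ κ z v| ≤ C ∧ |ptsDProfile₂ κ z v| ≤ C := by
  obtain ⟨C₁, hC₁⟩ := exists_forall_abs_rpow_mul_eval_mul_exp_neg_mul_le hκ
    (X ^ 2 - 6 * X + 3) one_half_pos
  obtain ⟨C₂, hC₂⟩ := exists_forall_abs_rpow_mul_eval_mul_exp_neg_mul_le hκ (1 - X) one_half_pos
  obtain ⟨C₃, hC₃⟩ := exists_forall_abs_rpow_mul_eval_mul_exp_neg_mul_le le_rfl (X - 1)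
    one_half_pos
  simp only [eval_add, eval_sub, eval_mul, eval_pow, eval_X, eval_one, eval_ofNat, rpow_zero,
    one_mul] at hC₁ hC₂ hC₃
  have hπ : |(8 * π)⁻¹| ≤ 1 := by
    rw [abs_of_pos (by positivity)]
    exact inv_le_one_of_one_le₀ (by linarith [pi_gt_three])
  have hexp (v : ℝ) (hv : 0 ≤ v) : |exp (-(1/2) * v)| ≤ 1 := by
    rw [abs_exp, exp_le_one_iff]; linarith
  refine ⟨max (max C₁ (C₂ * C₃)) 1, by positivity, fun z v hz hv => ?_⟩
  have h₁ := hC₁ z hz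
  have h₂ := hC₂ z hz
  have h₃ := hC₃ v hv
  have h₄ := hexp v hv
  have hC₁₀ : 0 ≤ C₁ := (abs_nonneg _).trans h₁
  have hC₂₀ : 0 ≤ C₂ := (abs_nonneg _).trans h₂
  unfold ptsDProfile₁ ptsDProfile₂
  constructor <;> rw [abs_mul, abs_mul]
  · calc _ ≤ 1 * C₁ * 1 := by gcongr
      _ ≤ _ := by simp
  · calc _ ≤ 1 * C₂ * C₃ := by gcongr
      _ ≤ _ := by simp

theorem abs_rpow_two_mul_eq_div_rpow_mul_rpow (a r : ℝ) {u : ℝ} (hu : 0 < u) :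
    |a| ^ (2 * r) = (a ^ 2 / u) ^ r * u ^ r := by
  rw [← mul_rpow (by positivity) hu.le, div_mul_cancel₀ _ hu.ne', rpow_mul (abs_nonneg a),
    rpow_two, sq_abs]

theorem neg_abs_rpow_mul_ptsD_eq (κ x y : ℝ) {s t : ℝ} (hs : 0 < s) (hst : s < t) :
    -(|x - y| ^ (1 + 2 * κ)) * ptsD t s x y =
      (t - s) ^ (κ - 2) * s ^ (-(1/2) : ℝ) * ptsDProfile₁ κ ((x - y) ^ 2 / (t - s)) (y ^ 2 / s) +
        (t - s) ^ (κ - 1) * s ^ (-(3/2) : ℝ) *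
          ptsDProfile₂ κ ((x - y) ^ 2 / (t - s)) (y ^ 2 / s) := by
  have hu : 0 < t - s := sub_pos.2 hst
  unfold ptsD pts ptsDProfile₁ ptsDProfile₂
  generalize t - s = u at *
  set z := (x - y) ^ 2 / u with hz
  have ha : |x - y| ^ (1 + 2 * κ) = z ^ (κ + 1/2) * u ^ κ * √u := by
    rw [show 1 + 2 * κ = 2 * (κ + 1/2) by ring, abs_rpow_two_mul_eq_div_rpow_mul_rpow _ _ hu,
      rpow_add hu, sqrt_eq_rpow, mul_assoc]
  have hsqrt : (√(s * u))⁻¹ = s ^ (-(1/2) : ℝ) * (√u)⁻¹ := by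
    rw [sqrt_mul hs.le, mul_inv, sqrt_eq_rpow s, ← rpow_neg hs.le]
  have hexp : exp (-(x - y) ^ 2 / (2 * u) - y ^ 2 / (2 * s)) =
      exp (-(1/2) * z) * exp (-(1/2) * (y ^ 2 / s)) := by
    rw [← exp_add]; congr 1; rw [hz]; ring
  have hu2 : u ^ (κ - 2) = u ^ κ / u ^ 2 := by rw [rpow_sub hu, rpow_two]
  have hu1 : u ^ (κ - 1) = u ^ κ / u := rpow_sub_one hu.ne' κ
  have hs32 : s ^ (-(3/2) : ℝ) = s ^ (-(1/2) : ℝ) / s := by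
    rw [show (-(3/2) : ℝ) = -(1/2) - 1 by norm_num, rpow_sub_one hs.ne']
  have hxy : (y - x) ^ 2 = z * u := by rw [hz, div_mul_cancel₀ _ hu.ne']; ring
  rw [ha, hsqrt, hexp, hu2, hu1, hs32, hxy]
  field_simp
  ring

/-- Let `κ ∈ (0,1)`. There is a constant `c > 0` such that for all
`0 < s < t` and all `x, y ∈ ℝ`,
`−|x−y|^{1+2κ} (∂²/∂t∂s) p_{t,s}(x,y) ≤ c (|t−s|^{κ−2} s^{−1/2} + |t−s|^{κ−1} s^{−3/2})`. -/
theorem statement9 (κ : ℝ) (hκ : κ ∈ Set.Ioo (0:ℝ) 1) :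
    ∃ c : ℝ, 0 < c ∧ ∀ s t x y : ℝ, 0 < s → s < t →
      -(|x - y| ^ (1 + 2 * κ)) * ptsD t s x y
        ≤ c * (|t - s| ^ (κ - 2) * s ^ (-(1/2) : ℝ)
             + |t - s| ^ (κ - 1) * s ^ (-(3/2) : ℝ)) := by
  obtain ⟨C, hC₀, hC⟩ := exists_abs_ptsDProfile_le (κ := κ) (by linarith [hκ.1])
  refine ⟨C, hC₀, fun s t x y hs hst => ?_⟩
  have hu : 0 < t - s := sub_pos.2 hst
  obtain ⟨h₁, h₂⟩ := hC ((x - y) ^ 2 / (t - s)) (y ^ 2 / s) (by positivity) (by positivity)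
  have hX : 0 ≤ (t - s) ^ (κ - 2) * s ^ (-(1/2) : ℝ) := by positivity
  have hY : 0 ≤ (t - s) ^ (κ - 1) * s ^ (-(3/2) : ℝ) := by positivity
  rw [abs_of_pos hu, neg_abs_rpow_mul_ptsD_eq κ x y hs hst]
  linear_combination mul_le_mul_of_nonneg_left ((le_abs_self _).trans h₁) hX +
    mul_le_mul_of_nonneg_left ((le_abs_self _).trans h₂) hY

end
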